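/- Bibasic generalization of Entry 1.6.5: Let q, h, t be complex numbers with |q^h| < 1, |q^t| < 1 and |q^{ht}| < 1 (principal complex powers), and let a, b be complex numbers with |a q^h| < 1 such that all denominators below are nonzero. Then ∑_{j=0}^∞ b^j (q^t)^{j(j+1)/2} / [(q^t;q^t)_j · (1 + a · q^h · (q^{ht})^j)] = (−bq^t;q^t)_∞ · ∑_{k=0}^∞ (−1)^k (aq^h)^k / (−bq^t;q^t)_{hk}. -/

import Mathlib

open Complex

/-- Finite q-Pochhammer symbol `(A;Q)_k = ∏_{r=0}^{k-1} (1 - A Q^r)`. -/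
noncomputable def qp (A Q : ℂ) (k : ℕ) : ℂ := ∏ r ∈ Finset.range k, (1 - A * Q ^ r)

/-- Infinite q-Pochhammer symbol `(A;Q)_∞ = ∏_{r=0}^{∞} (1 - A Q^r)`. -/
noncomputable def qpInf (A Q : ℂ) : ℂ := ∏' r : ℕ, (1 - A * Q ^ r)

/-- q-Pochhammer symbol with (possibly non-integer) index:
`(A;Q)_{c k} := (A;Q)_∞ / (A R^k;Q)_∞` where `R = Q^c`. -/
noncomputable def qpc (A Q R : ℂ) (k : ℕ) : ℂ := qpInf A Q / qpInf (A * R ^ k) Q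

/-- q-Pochhammer symbol with shifted (possibly non-integer) index:
`(A;Q)_{c k + 1} := (A;Q)_∞ / (A Q R^k;Q)_∞` where `R = Q^c`. -/
noncomputable def qpc1 (A Q R : ℂ) (k : ℕ) : ℂ := qpInf A Q / qpInf (A * Q * R ^ k) Q

/-!
With `Q = q^t`, `P = q^{ht}` and `x = a q^h`, expand `1 / (1 + x P^j)` as the geometric series
`∑_k (-x)^k P^{jk}` and interchange the two (absolutely convergent) summations. The inner sum
over `j` is then Euler's series `∑_j z^j Q^{j(j+1)/2} / (Q;Q)_j = (-zQ;Q)_∞` at `z = b P^k`,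
and `(-bQ P^k;Q)_∞ = (-bQ;Q)_∞ / (-bQ;Q)_{hk}`.

Euler's identity follows from the functional equation `F(z) = (1 + zQ) F(zQ)` of its left side:
iterating gives `F(z) = (-zQ;Q)_n F(zQ^n)`, and `F(zQ^n) → F(0) = 1`.
-/

open Filter Topology

noncomputable def eulerTerm (Q z : ℂ) (j : ℕ) : ℂ := z ^ j * Q ^ (j * (j + 1) / 2) / qp Q Q j

@[simp] lemma qp_zero (A Q : ℂ) : qp A Q 0 = 1 := Finset.prod_range_zero _

lemma qp_succ (A Q : ℂ) (n : ℕ) : qp A Q (n + 1) = qp A Q n * (1 - A * Q ^ n) :=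
  Finset.prod_range_succ _ _

lemma tendsto_qp_qpInf (A : ℂ) {Q : ℂ} (hQ : ‖Q‖ < 1) :
    Tendsto (qp A Q) atTop (𝓝 (qpInf A Q)) := by
  have hsum : Summable fun r : ℕ => ‖-(A * Q ^ r)‖ := by
    simpa [norm_pow] using
      (summable_geometric_of_lt_one (norm_nonneg Q) hQ).mul_left ‖A‖
  have hmul : Multipliable fun r : ℕ => 1 - A * Q ^ r := by
    simpa [sub_eq_add_neg] using multipliable_one_add_of_summable hsum
  exact hmul.hasProd.tendsto_prod_nat

lemma div_qpc {A Q : ℂ} (hA : qpInf A Q ≠ 0) (R : ℂ) (k : ℕ) :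
    qpInf A Q / qpc A Q R k = qpInf (A * R ^ k) Q :=
  div_div_cancel₀ hA

lemma one_sub_norm_le_norm_one_sub_pow {Q : ℂ} (hQ : ‖Q‖ ≤ 1) (n : ℕ) :
    1 - ‖Q‖ ≤ ‖1 - Q ^ (n + 1)‖ :=
  calc 1 - ‖Q‖ ≤ 1 - ‖Q ^ (n + 1)‖ := by
        rw [norm_pow]; gcongr; exact pow_le_of_le_one (norm_nonneg _) hQ n.succ_ne_zero
    _ ≤ ‖1 - Q ^ (n + 1)‖ := by simpa using norm_sub_norm_le (1 : ℂ) (Q ^ (n + 1))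

lemma one_sub_pow_succ_ne_zero {Q : ℂ} (hQ : ‖Q‖ < 1) (n : ℕ) : 1 - Q ^ (n + 1) ≠ 0 :=
  norm_pos_iff.1 ((sub_pos.2 hQ).trans_le (one_sub_norm_le_norm_one_sub_pow hQ.le n))

@[simp] lemma eulerTerm_zero (Q z : ℂ) : eulerTerm Q z 0 = 1 := by simp [eulerTerm]

lemma eulerTerm_succ (Q z : ℂ) (j : ℕ) :
    eulerTerm Q z (j + 1) = eulerTerm Q z j * (z * Q ^ (j + 1) / (1 - Q ^ (j + 1))) := by
  have hexp : (j + 1) * (j + 1 + 1) / 2 = j * (j + 1) / 2 + (j + 1) := by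
    rw [show (j + 1) * (j + 1 + 1) = j * (j + 1) + 2 * (j + 1) by ring,
      Nat.add_mul_div_left _ _ two_pos]
  rw [eulerTerm, eulerTerm, qp_succ, hexp, ← pow_succ', ← mul_div_mul_comm]
  ring

lemma eulerTerm_mul_right (Q z w : ℂ) (j : ℕ) :
    eulerTerm Q (z * w) j = w ^ j * eulerTerm Q z j := by
  rw [eulerTerm, eulerTerm, mul_pow]; ring

section
variable {Q : ℂ} (hQ : ‖Q‖ < 1)
include hQ

lemma summable_norm_eulerTerm (z : ℂ) : Summable fun j => ‖eulerTerm Q z j‖ := by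
  have hratio : Tendsto (fun n : ℕ => ‖z‖ * ‖Q‖ ^ (n + 1) / (1 - ‖Q‖)) atTop (𝓝 0) := by
    simpa using (((tendsto_pow_atTop_nhds_zero_of_lt_one (norm_nonneg Q) hQ).comp
      (tendsto_add_atTop_nat 1)).const_mul ‖z‖).div_const (1 - ‖Q‖)
  refine summable_of_ratio_norm_eventually_le (r := 1 / 2) (by norm_num) ?_
  filter_upwards [hratio.eventually (eventually_le_nhds one_half_pos)] with n hn
  have hstep : ‖z * Q ^ (n + 1) / (1 - Q ^ (n + 1))‖ ≤ 1 / 2 := by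
    rw [norm_div, norm_mul, norm_pow]
    refine le_trans ?_ hn
    gcongr
    exact one_sub_norm_le_norm_one_sub_pow hQ.le n
  rw [norm_norm, norm_norm, eulerTerm_succ, norm_mul, mul_comm]
  exact mul_le_mul_of_nonneg_right hstep (norm_nonneg _)

lemma summable_eulerTerm (z : ℂ) : Summable (eulerTerm Q z) :=
  (summable_norm_eulerTerm hQ z).of_norm

lemma tsum_eulerTerm_eq_mul (z : ℂ) :
    ∑' j, eulerTerm Q z j = (1 + z * Q) * ∑' j, eulerTerm Q (z * Q) j := by
  have hs := summable_eulerTerm hQ (z * Q)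
  have hrec (j : ℕ) :
      eulerTerm Q z (j + 1) = eulerTerm Q (z * Q) (j + 1) + z * Q * eulerTerm Q (z * Q) j := by
    rw [eulerTerm_succ, eulerTerm_succ, eulerTerm_mul_right Q z Q j]
    field_simp [one_sub_pow_succ_ne_zero hQ j]
    ring
  rw [(summable_eulerTerm hQ z).tsum_eq_zero_add, hs.tsum_eq_zero_add, tsum_congr hrec,
    ((summable_nat_add_iff 1).2 hs).tsum_add (hs.mul_left _), tsum_mul_left,
    hs.tsum_eq_zero_add]
  simp only [eulerTerm_zero]
  ring

lemma tendsto_tsum_eulerTerm_mul_pow (z : ℂ) :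
    Tendsto (fun n : ℕ => ∑' j, eulerTerm Q (z * Q ^ n) j) atTop (𝓝 1) := by
  have hQn := tendsto_pow_atTop_nhds_zero_of_norm_lt_one hQ
  have hlim : ∑' j, (0 : ℂ) ^ j * eulerTerm Q z j = 1 := by
    rw [tsum_eq_single 0 fun j hj => by simp [hj]]; simp
  simp_rw [eulerTerm_mul_right]
  rw [← hlim]
  refine tendsto_tsum_of_dominated_convergence (summable_norm_eulerTerm hQ z)
    (fun j => (hQn.pow j).mul_const _) (Eventually.of_forall fun n j => ?_)
  rw [norm_mul, norm_pow, norm_pow]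
  exact mul_le_of_le_one_left (norm_nonneg _)
    (pow_le_one₀ (by positivity) (pow_le_one₀ (norm_nonneg _) hQ.le))

theorem tsum_eulerTerm (z : ℂ) : ∑' j, eulerTerm Q z j = qpInf (-z * Q) Q := by
  have hiter (n : ℕ) :
      ∑' j, eulerTerm Q z j = qp (-z * Q) Q n * ∑' j, eulerTerm Q (z * Q ^ n) j := by
    induction n with
    | zero => simp
    | succ n ih =>
      rw [ih, tsum_eulerTerm_eq_mul hQ, qp_succ, mul_assoc z, ← pow_succ]
      ring
  have hlim := (tendsto_qp_qpInf (-z * Q) hQ).mul (tendsto_tsum_eulerTerm_mul_pow hQ z)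
  rw [mul_one, ← funext hiter] at hlim
  exact tendsto_nhds_unique tendsto_const_nhds hlim

theorem tsum_eulerTerm_div_one_add {P x : ℂ} (hP : ‖P‖ ≤ 1) (hx : ‖x‖ < 1) (b : ℂ) :
    ∑' j, eulerTerm Q b j / (1 + x * P ^ j) = ∑' k, (-x) ^ k * qpInf (-(b * P ^ k) * Q) Q := by
  have hgeom (j : ℕ) : 1 / (1 + x * P ^ j) = ∑' k, (-x) ^ k * P ^ (j * k) := by
    have hxP : ‖-x * P ^ j‖ < 1 := by
      rw [norm_mul, norm_neg, norm_pow]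
      exact (mul_le_of_le_one_right (norm_nonneg x) (pow_le_one₀ (norm_nonneg _) hP)).trans_lt hx
    simp_rw [pow_mul, ← mul_pow]
    rw [tsum_geometric_of_norm_lt_one hxP, one_div]
    ring_nf
  have hsum : Summable fun p : ℕ × ℕ => eulerTerm Q b p.1 * ((-x) ^ p.2 * P ^ (p.1 * p.2)) := by
    refine Summable.of_norm_bounded ((summable_norm_eulerTerm hQ b).mul_of_nonneg
      (summable_geometric_of_lt_one (norm_nonneg x) hx) (fun _ => norm_nonneg _)
      (fun _ => by positivity)) fun p => ?_
    rw [norm_mul, norm_mul, norm_pow, norm_pow, norm_neg]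
    gcongr
    exact mul_le_of_le_one_right (by positivity) (pow_le_one₀ (norm_nonneg _) hP)
  calc ∑' j, eulerTerm Q b j / (1 + x * P ^ j)
      = ∑' j, ∑' k, eulerTerm Q b j * ((-x) ^ k * P ^ (j * k)) := by
        refine tsum_congr fun j => ?_
        rw [div_eq_mul_one_div, hgeom, tsum_mul_left]
    _ = ∑' k, ∑' j, eulerTerm Q b j * ((-x) ^ k * P ^ (j * k)) := hsum.tsum_comm.symm
    _ = ∑' k, (-x) ^ k * qpInf (-(b * P ^ k) * Q) Q := by
        refine tsum_congr fun k => ?_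
        rw [← tsum_eulerTerm hQ, ← tsum_mul_left]
        refine tsum_congr fun j => ?_
        rw [eulerTerm_mul_right, pow_mul']
        ring

end

theorem entry_1_6_5_bibasic_general (q h t a b : ℂ)
    (hqt : ‖q ^ t‖ < 1)
    (hqht : ‖q ^ (h * t)‖ < 1)
    (haq : ‖a * q ^ h‖ < 1)
    (h4 : ∀ k : ℕ, qpInf (-b * q ^ t * (q ^ (h * t)) ^ k) (q ^ t) ≠ 0) :
    ∑' j : ℕ, b ^ j * (q ^ t) ^ (j * (j + 1) / 2) /
        (qp (q ^ t) (q ^ t) j * (1 + a * q ^ h * (q ^ (h * t)) ^ j))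
    = qpInf (-b * q ^ t) (q ^ t) *
      ∑' k : ℕ, (-1 : ℂ) ^ k * (a * q ^ h) ^ k /
        qpc (-b * q ^ t) (q ^ t) (q ^ (h * t)) k := by
  have hne : qpInf (-b * q ^ t) (q ^ t) ≠ 0 := by simpa using h4 0
  calc _ = ∑' j, eulerTerm (q ^ t) b j / (1 + a * q ^ h * (q ^ (h * t)) ^ j) := by
        simp only [eulerTerm, div_div]
    _ = ∑' k, (-(a * q ^ h)) ^ k * qpInf (-(b * (q ^ (h * t)) ^ k) * q ^ t) (q ^ t) :=
        tsum_eulerTerm_div_one_add hqt hqht.le haq b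
    _ = _ := by
        rw [← tsum_mul_left]
        refine tsum_congr fun k => ?_
        rw [mul_div_left_comm, div_qpc hne, neg_pow (a * q ^ h)]
        ring_nf

/-- bibasic generalization of Entry 1.6.5. -/
theorem entry_1_6_5_bibasic (q h t a b : ℂ)
    (hqh : ‖q ^ h‖ < 1) (hqt : ‖q ^ t‖ < 1)
    (hqht : ‖q ^ (h * t)‖ < 1)
    (haq : ‖a * q ^ h‖ < 1)
    (h1 : ∀ j : ℕ, qp (q ^ t) (q ^ t) j ≠ 0)
    (h2 : ∀ j : ℕ, (1 + a * q ^ h * (q ^ (h * t)) ^ j) ≠ 0)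
    (h3 : ∀ k : ℕ, qpc (-b * q ^ t) (q ^ t) (q ^ (h * t)) k ≠ 0)
    (h4 : ∀ k : ℕ, qpInf (-b * q ^ t * (q ^ (h * t)) ^ k) (q ^ t) ≠ 0) :
    ∑' j : ℕ, b ^ j * (q ^ t) ^ (j * (j + 1) / 2) /
        (qp (q ^ t) (q ^ t) j * (1 + a * q ^ h * (q ^ (h * t)) ^ j))
    = qpInf (-b * q ^ t) (q ^ t) *
      ∑' k : ℕ, (-1 : ℂ) ^ k * (a * q ^ h) ^ k /
        qpc (-b * q ^ t) (q ^ t) (q ^ (h * t)) k :=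
  entry_1_6_5_bibasic_general q h t a b hqt hqht haq h4
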